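/- Let K > 0 and C_U ∈ ℝ, let h : ℝ → ℝ be measurable with Ψ(y; |h|) < ∞ for all y, and suppose a̲ ∈ ℝ satisfies Ψ(y; h) < 0 for y < a̲ and Ψ(y; h) > 0 for y > a̲. Define Λ(s, x) = ∫_s^x Ψ(y; h) Θ̄(x−y) dy + K for x ≥ s and Λ(s, x) = K for x < s, where Θ̄(x) = W(x) − Φ(q) ∫₀^x W(y) dy. Assume Θ̄(x) ≥ 0 for all x ≥ 0. Suppose s* < a̲ < S* satisfy Λ(s*, S*) = 0 and Λ(s*, x) ≥ 0 for all x. Then for any constant c, the function v(x) = Λ(s*, x) + c − C_U x satisfies: v(x) = K + inf_{u ≥ 0} [C_U u + v(x+u)] for every x ≤ s*, and v(x) ≤ K + inf_{u ≥ 0} [C_U u + v(x+u)] for every x with s* < x ≤ a̲. -/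
import Mathlib


open MeasureTheory Set Filter Topology

noncomputable section

/-- The Laplace exponent of a spectrally negative Lévy process with data `(γ, σ, ν)`. -/
def psi (γ σ : ℝ) (ν : Measure ℝ) (s : ℝ) : ℝ :=
  γ * s + σ ^ 2 * s ^ 2 / 2 +
    ∫ z in Set.Iio (0 : ℝ), (Real.exp (s * z) - 1 - s * z * (if -1 < z then (1:ℝ) else 0)) ∂ν

/-- `Φ(q) = sup {λ ≥ 0 : ψ(λ) = q}`. -/
def PhiQ (γ σ : ℝ) (ν : Measure ℝ) (q : ℝ) : ℝ :=
  sSup {l : ℝ | 0 ≤ l ∧ psi γ σ ν l = q}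

/-- `Z^{(q)}(x) = 1 + q ∫₀ˣ W(y) dy`. -/
def Zfun (q : ℝ) (W : ℝ → ℝ) (x : ℝ) : ℝ := 1 + q * ∫ y in (0:ℝ)..x, W y

/-- `Z̄^{(q)}(x) = ∫₀ˣ Z(z) dz`. -/
def Zbar (q : ℝ) (W : ℝ → ℝ) (x : ℝ) : ℝ := ∫ z in (0:ℝ)..x, Zfun q W z

/-- `R^{(q)}(x) = Z̄(x) + ψ'(0+)/q`. -/
def Rfun (q psi'0 : ℝ) (W : ℝ → ℝ) (x : ℝ) : ℝ := Zbar q W x + psi'0 / q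

/-- `Ψ(s; h) = ∫_s^∞ e^{-Φ(q)(y-s)} h(y) dy`. -/
def PsiInt (Φq s : ℝ) (h : ℝ → ℝ) : ℝ := ∫ y in Set.Ioi s, Real.exp (-Φq * (y - s)) * h y

/-- `φ_s(x; h) = ∫_s^x W(x-y) h(y) dy`. -/
def phiInt (W : ℝ → ℝ) (s x : ℝ) (h : ℝ → ℝ) : ℝ := ∫ y in s..x, W (x - y) * h y

/-- Integrand of the nonlocal part of the generator `L`. -/
def genInt (h : ℝ → ℝ) (x z : ℝ) : ℝ :=
  h (x + z) - h x - deriv h x * z * (if -1 < z then (1:ℝ) else 0)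

/-- The generator `L` of the Lévy process, applied to a sufficiently smooth function. -/
def Lgen (γ σ : ℝ) (ν : Measure ℝ) (h : ℝ → ℝ) (x : ℝ) : ℝ :=
  γ * deriv h x + σ ^ 2 / 2 * deriv (deriv h) x + ∫ z in Set.Iio (0 : ℝ), genInt h x z ∂ν

/-- `W̄(x) = ∫₀ˣ W(y) dy`. -/
def Wbar (W : ℝ → ℝ) (x : ℝ) : ℝ := ∫ y in (0:ℝ)..x, W y

/-- `Θ̄(x) = W(x) − Φ(q) W̄(x)`. -/
def Thetabar (Φq : ℝ) (W : ℝ → ℝ) (x : ℝ) : ℝ := W x - Φq * Wbar W x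

/-- `Λ(s,x) = ∫_s^x Ψ(y;h) Θ̄(x−y) dy + K` for `x ≥ s`, and `Λ(s,x) = K` for `x < s`. -/
def Lam10 (Φq K : ℝ) (W h : ℝ → ℝ) (s x : ℝ) : ℝ :=
  if s ≤ x then (∫ y in s..x, PsiInt Φq y h * Thetabar Φq W (x - y)) + K else K

theorem stmt10
    (γ σ q : ℝ) (ν : Measure ℝ) (W : ℝ → ℝ)
    (hσ : 0 ≤ σ)
    (hνconc : ν (Set.Ici 0) = 0)
    (hνint : Integrable (fun z => min 1 (z ^ 2)) ν)
    (hψtop : Tendsto (psi γ σ ν) atTop atTop)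
    (hq : 0 < q)
    (hΦpos : 0 < PhiQ γ σ ν q)
    (hWnonneg : ∀ x, 0 ≤ W x)
    (hWzero : ∀ x < 0, W x = 0)
    (hWcont : ContinuousOn W (Set.Ici 0))
    (hWmono : StrictMonoOn W (Set.Ici 0))
    (hWlaplace : ∀ s, PhiQ γ σ ν q < s →
      ∫ x in Set.Ioi (0:ℝ), Real.exp (-s * x) * W x = 1 / (psi γ σ ν s - q))
    (K C_U : ℝ) (hK : 0 < K)
    (h : ℝ → ℝ) (hmeas : Measurable h)
    (hint : ∀ y : ℝ, IntegrableOn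
      (fun z => Real.exp (-(PhiQ γ σ ν q) * (z - y)) * |h z|) (Set.Ioi y))
    (aund : ℝ)
    (hund1 : ∀ y < aund, PsiInt (PhiQ γ σ ν q) y h < 0)
    (hund2 : ∀ y, aund < y → 0 < PsiInt (PhiQ γ σ ν q) y h)
    (hTheta : ∀ x, 0 ≤ x → 0 ≤ Thetabar (PhiQ γ σ ν q) W x)
    (sstar Sstar : ℝ) (hs : sstar < aund) (hS : aund < Sstar)
    (hzero : Lam10 (PhiQ γ σ ν q) K W h sstar Sstar = 0)
    (hnonneg : ∀ x, 0 ≤ Lam10 (PhiQ γ σ ν q) K W h sstar x) :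
    ∀ c : ℝ,
      (∀ x ≤ sstar,
        Lam10 (PhiQ γ σ ν q) K W h sstar x + c - C_U * x
          = K + sInf {r : ℝ | ∃ u, 0 ≤ u ∧
              r = C_U * u + (Lam10 (PhiQ γ σ ν q) K W h sstar (x + u) + c - C_U * (x + u))}) ∧
      (∀ x, sstar < x → x ≤ aund →
        Lam10 (PhiQ γ σ ν q) K W h sstar x + c - C_U * x
          ≤ K + sInf {r : ℝ | ∃ u, 0 ≤ u ∧
              r = C_U * u + (Lam10 (PhiQ γ σ ν q) K W h sstar (x + u) + c - C_U * (x + u))}) := by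
  intro c
  have key : ∀ x : ℝ, x ≤ aund →
      sInf {r : ℝ | ∃ u, 0 ≤ u ∧ r = C_U * u +
        (Lam10 (PhiQ γ σ ν q) K W h sstar (x + u) + c - C_U * (x + u))} = c - C_U * x := by
    intro x hx
    apply le_antisymm
    · apply csInf_le
      · refine ⟨c - C_U * x, ?_⟩
        rintro r ⟨u, hu, rfl⟩
        have := hnonneg (x + u); linarith
      · refine ⟨Sstar - x, by linarith, ?_⟩
        rw [show x + (Sstar - x) = Sstar by ring, hzero]; ring
    · refine le_csInf ⟨_, Sstar - x, by linarith, rfl⟩ ?_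
      rintro r ⟨u, hu, rfl⟩
      have := hnonneg (x + u); linarith
  constructor
  · intro x hx
    rw [key x (by linarith)]
    have hΛ : Lam10 (PhiQ γ σ ν q) K W h sstar x = K := by
      unfold Lam10
      rcases lt_or_eq_of_le hx with h' | h'
      · rw [if_neg (not_le.mpr h')]
      · subst h'
        simp
    rw [hΛ]; ring
  · intro x hx1 hx2
    rw [key x hx2]
    have hΛ : Lam10 (PhiQ γ σ ν q) K W h sstar x ≤ K := by
      unfold Lam10
      rw [if_pos hx1.le]
      have hI : (∫ y in sstar..x,
          PsiInt (PhiQ γ σ ν q) y h * Thetabar (PhiQ γ σ ν q) W (x - y)) ≤ 0 := by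
        rw [intervalIntegral.integral_of_le hx1.le,
            MeasureTheory.integral_Ioc_eq_integral_Ioo]
        apply setIntegral_nonpos measurableSet_Ioo
        intro y hy
        have h1 : PsiInt (PhiQ γ σ ν q) y h < 0 :=
          hund1 y (lt_of_lt_of_le hy.2 hx2)
        have h2 : 0 ≤ Thetabar (PhiQ γ σ ν q) W (x - y) :=
          hTheta _ (by linarith [hy.2])
        exact mul_nonpos_iff.mpr (Or.inr ⟨h1.le, h2⟩)
      linarith
    linarith
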